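/- Suppose S is a real-valued scoring rule for binary outcomes with S(·,0) and S(·,1) continuous on [0,1], such that Ev_S(a,b,c,d) = Youden(a,b,c,d) for every quadruple of natural numbers (a,b,c,d) with a + c ≠ 0 and b + d ≠ 0. Then S(z,0) = S(z,1) for every z ∈ [0,1]. -/
import Mathlib


/-- The Youden index of a 2×2 contingency table `(a,b,c,d)` (real arithmetic,
with the convention `x/0 = 0`). -/
noncomputable def Youden (a b c d : ℕ) : ℝ :=
  (a : ℝ) / ((a : ℝ) + (c : ℝ)) + (d : ℝ) / ((b : ℝ) + (d : ℝ)) - 1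

/-- The Tjur-R²-like evaluation of the scoring rule `S : ℝ → Fin 2 → ℝ` on the
table `(a,b,c,d)`, with predicted probabilities `p₁ = a/(a+b)` and
`p₀ = c/(c+d)` (convention `0/0 = 0`). -/
noncomputable def Ev (S : ℝ → Fin 2 → ℝ) (a b c d : ℕ) : ℝ :=
  (1 / ((a : ℝ) + c)) *
    ((a : ℝ) * S ((a : ℝ) / ((a : ℝ) + (b : ℝ))) 1
      + (c : ℝ) * S ((c : ℝ) / ((c : ℝ) + (d : ℝ))) 0)
  - (1 / ((b : ℝ) + d)) *
    ((b : ℝ) * S ((a : ℝ) / ((a : ℝ) + (b : ℝ))) 0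
      + (d : ℝ) * S ((c : ℝ) / ((c : ℝ) + (d : ℝ))) 1)

/-- If `S(·,0)` and `S(·,1)` are continuous on `[0,1]` and the Tjur-R²-like
evaluation of `S` equals the Youden index on all admissible tables, then
`S(z, 0) = S(z, 1)` for every `z ∈ [0,1]`. -/
theorem scoring_rule_ev_symmetric (S : ℝ → Fin 2 → ℝ)
    (h0 : ContinuousOn (fun p => S p 0) (Set.Icc (0 : ℝ) 1))
    (h1 : ContinuousOn (fun p => S p 1) (Set.Icc (0 : ℝ) 1))
    (hS : ∀ a b c d : ℕ, a + c ≠ 0 → b + d ≠ 0 → Ev S a b c d = Youden a b c d) :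
    ∀ z ∈ Set.Icc (0 : ℝ) 1, S z 0 = S z 1 := by
  set D : Set ℝ := {x | ∃ a b : ℕ, 0 < a ∧ 0 < b ∧ x = (a : ℝ) / ((a : ℝ) + (b : ℝ))}
  have key : ∀ x ∈ D, S x 0 = S x 1 := by
    rintro x ⟨a, b, ha, hb, rfl⟩
    have h := hS a b 0 0 (by omega) (by omega)
    have ha' : (a : ℝ) ≠ 0 := Nat.cast_ne_zero.mpr ha.ne'
    have hb' : (b : ℝ) ≠ 0 := Nat.cast_ne_zero.mpr hb.ne'
    simp only [Ev, Youden, Nat.cast_zero, add_zero, zero_mul, zero_div, zero_add,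
      mul_zero] at h
    field_simp at h
    linarith
  have hDIcc : D ⊆ Set.Icc (0 : ℝ) 1 := by
    rintro x ⟨a, b, ha, hb, rfl⟩
    have h1 : (0:ℝ) < (a:ℝ) + (b:ℝ) := by positivity
    constructor
    · positivity
    · rw [div_le_one h1]
      have hb0 : (0:ℝ) ≤ (b:ℝ) := by positivity
      linarith
  -- density
  have hQ : Set.Ioo (0:ℝ) 1 ∩ Set.range ((↑) : ℚ → ℝ) ⊆ D := by
    rintro x ⟨⟨hx0, hx1⟩, q, rfl⟩
    have hq0 : 0 < q := by exact_mod_cast hx0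
    have hq1 : q < 1 := by exact_mod_cast hx1
    have hnum : 0 < q.num := Rat.num_pos.mpr hq0
    have hnd : q.num < (q.den : ℤ) := by
      have hd : (0:ℚ) < (q.den : ℚ) := by exact_mod_cast q.pos
      have : (q.num : ℚ) < (q.den : ℚ) := by
        rw [← Rat.num_div_den q, div_lt_one hd] at hq1
        exact hq1
      exact_mod_cast this
    refine ⟨q.num.toNat, q.den - q.num.toNat, ?_, ?_, ?_⟩
    · omega
    · have : q.num.toNat < q.den := by omega
      omega
    · have hsum : (q.num.toNat : ℝ) + ((q.den - q.num.toNat : ℕ) : ℝ) = (q.den : ℝ) := by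
        have h1 : q.num.toNat ≤ q.den := by omega
        push_cast [Nat.cast_sub h1]
        ring
      rw [hsum]
      rw [Rat.cast_def]
      congr 1
      rw [← Int.toNat_of_nonneg hnum.le]
      push_cast
      rfl
  have hclos : Set.Icc (0:ℝ) 1 ⊆ closure D := by
    have h1 : Set.Ioo (0:ℝ) 1 ⊆ closure D := by
      have h2 : Dense (Set.range ((↑) : ℚ → ℝ)) := Rat.denseRange_cast (𝕜 := ℝ)
      intro x hx
      exact closure_mono hQ (h2.open_subset_closure_inter isOpen_Ioo hx)
    calc Set.Icc (0:ℝ) 1 = closure (Set.Ioo (0:ℝ) 1) := (closure_Ioo one_ne_zero.symm).symm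
      _ ⊆ closure (closure D) := closure_mono h1
      _ = closure D := closure_closure
  intro z hz
  have hzD : z ∈ closure D := hclos hz
  have hne : (nhdsWithin z D).NeBot := mem_closure_iff_nhdsWithin_neBot.mp hzD
  have hg : ContinuousWithinAt (fun p => S p 0 - S p 1) (Set.Icc (0:ℝ) 1) z :=
    ((h0.sub h1) z hz)
  have ht1 : Filter.Tendsto (fun p => S p 0 - S p 1) (nhdsWithin z D) (nhds (S z 0 - S z 1)) :=
    hg.mono_left (nhdsWithin_mono _ hDIcc)
  have ht2 : Filter.Tendsto (fun p => S p 0 - S p 1) (nhdsWithin z D) (nhds 0) := by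
    refine Filter.Tendsto.congr' ?_ tendsto_const_nhds
    filter_upwards [self_mem_nhdsWithin] with x hx
    rw [key x hx]; ring
  have := tendsto_nhds_unique ht1 ht2
  linarith
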